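/- Consider a softmax classifier over K classes: given a feature vector φ ∈ ℝ^d and weight rows W_1,…,W_K ∈ ℝ^d, the probability of class k is p(k | φ, W) = exp(φᵀW_k) / Σ_{l=1}^K exp(φᵀW_l). For any φ ∈ ℝ^d, any weight rows W_1,…,W_K, and any two classes i, j ∈ {1,…,K}, |p(j | φ, W) − p(i | φ, W)| ≤ max(p(i | φ, W), p(j | φ, W)) · ‖φ‖ · ‖W_j − W_i‖. -/

import Mathlib

open scoped RealInnerProductSpace BigOperators

/-- Softmax probability of class `k` given feature vector `φ` and weight rows `W`. -/
noncomputable def softmaxProb {d K : ℕ} (W : Fin K → EuclideanSpace ℝ (Fin d))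
    (φ : EuclideanSpace ℝ (Fin d)) (k : Fin K) : ℝ :=
  Real.exp ⟪φ, W k⟫ / ∑ l, Real.exp ⟪φ, W l⟫

lemma abs_exp_sub_exp_le (a b : ℝ) :
    |Real.exp a - Real.exp b| ≤ max (Real.exp a) (Real.exp b) * |a - b| := by
  have h1 := Real.add_one_le_exp (b - a)
  have h2 := Real.add_one_le_exp (a - b)
  have ha := Real.exp_pos a
  have hb := Real.exp_pos b
  have hma : Real.exp a ≤ max (Real.exp a) (Real.exp b) := le_max_left _ _
  have hmb : Real.exp b ≤ max (Real.exp a) (Real.exp b) := le_max_right _ _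
  have l1 := le_abs_self (a - b)
  have l2 := neg_abs_le (a - b)
  have e1 : Real.exp (b - a) * Real.exp a = Real.exp b := by
    rw [← Real.exp_add]; ring_nf
  have e2 : Real.exp (a - b) * Real.exp b = Real.exp a := by
    rw [← Real.exp_add]; ring_nf
  have k1 : Real.exp a - Real.exp b ≤ (a - b) * Real.exp a := by
    nlinarith [mul_le_mul_of_nonneg_right h1 ha.le]
  have k2 : Real.exp b - Real.exp a ≤ (b - a) * Real.exp b := by
    nlinarith [mul_le_mul_of_nonneg_right h2 hb.le]
  rw [abs_sub_le_iff]
  constructor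
  · calc Real.exp a - Real.exp b ≤ (a - b) * Real.exp a := k1
      _ ≤ |a - b| * (max (Real.exp a) (Real.exp b)) :=
        mul_le_mul l1 hma ha.le (abs_nonneg _)
      _ = max (Real.exp a) (Real.exp b) * |a - b| := mul_comm _ _
  · calc Real.exp b - Real.exp a ≤ (b - a) * Real.exp b := k2
      _ ≤ |a - b| * (max (Real.exp a) (Real.exp b)) := by
        have : b - a ≤ |a - b| := by rw [abs_sub_comm]; exact le_abs_self _
        exact mul_le_mul this hmb hb.le (abs_nonneg _)
      _ = max (Real.exp a) (Real.exp b) * |a - b| := mul_comm _ _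

/-- A bound on the difference of two softmax probabilities: the mean-value identity from
the proof of Lemma 1 combined with Cauchy–Schwarz. -/
theorem softmax_difference_bound
    {d K : ℕ}
    (φ : EuclideanSpace ℝ (Fin d))
    (W : Fin K → EuclideanSpace ℝ (Fin d))
    (i j : Fin K) :
    |softmaxProb W φ j - softmaxProb W φ i| ≤
      max (softmaxProb W φ i) (softmaxProb W φ j) * ‖φ‖ * ‖W j - W i‖ := by
  have : Nonempty (Fin K) := ⟨i⟩
  set S : ℝ := ∑ l, Real.exp ⟪φ, W l⟫ with hSdef
  have hS : 0 < S := Finset.sum_pos (fun l _ => Real.exp_pos _) Finset.univ_nonempty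
  have key : |Real.exp ⟪φ, W j⟫ - Real.exp ⟪φ, W i⟫| ≤
      max (Real.exp ⟪φ, W i⟫) (Real.exp ⟪φ, W j⟫) * (‖φ‖ * ‖W j - W i‖) := by
    have h1 := abs_exp_sub_exp_le ⟪φ, W j⟫ ⟪φ, W i⟫
    have h2 : |⟪φ, W j⟫ - ⟪φ, W i⟫| ≤ ‖φ‖ * ‖W j - W i‖ := by
      rw [← inner_sub_right]
      exact abs_real_inner_le_norm _ _
    calc |Real.exp ⟪φ, W j⟫ - Real.exp ⟪φ, W i⟫|
        ≤ max (Real.exp ⟪φ, W j⟫) (Real.exp ⟪φ, W i⟫) * |⟪φ, W j⟫ - ⟪φ, W i⟫| := h1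
      _ ≤ max (Real.exp ⟪φ, W i⟫) (Real.exp ⟪φ, W j⟫) * (‖φ‖ * ‖W j - W i‖) := by
          rw [max_comm]
          exact mul_le_mul_of_nonneg_left h2 (le_max_of_le_left (Real.exp_pos _).le)
  unfold softmaxProb
  rw [← hSdef, div_sub_div_same, abs_div, abs_of_pos hS, div_le_iff₀ hS]
  calc |Real.exp ⟪φ, W j⟫ - Real.exp ⟪φ, W i⟫|
      ≤ max (Real.exp ⟪φ, W i⟫) (Real.exp ⟪φ, W j⟫) * (‖φ‖ * ‖W j - W i‖) := key
    _ = max (Real.exp ⟪φ, W i⟫ / S) (Real.exp ⟪φ, W j⟫ / S) * ‖φ‖ * ‖W j - W i‖ * S := by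
        rw [max_div_div_right hS.le]
        field_simp
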